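/- For every ε > 0 sufficiently small, g(1-ε, 2+ε) > 0; more precisely, there exists ε₀ > 0 such that for all ε ∈ (0, ε₀), 2/(2+ε) - 2(1-ε)^{2+ε} + (1-ε)^{2(2+ε)-1} > 0. -/

import Mathlib

/-!
Near `(q, n) = (1, 2)` bound `q ^ n ≤ q ^ 2` (as `q ≤ 1`) and `q ^ (2n - 1) ≥ 1 - (2n - 1)(1 - q)`
(Bernoulli). At `q = 1 - ε`, `n = 2 + ε` this gives `g(1 - ε, 2 + ε) ≥ ε / 2 - 4ε²`, positive for `ε < 1/8`.
-/

open Real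

noncomputable def g (q n : ℝ) : ℝ := 2 / n - 2 * q ^ n + q ^ (2 * n - 1)

theorem le_g_of_le_one {q n : ℝ} (hq0 : 0 < q) (hq1 : q ≤ 1) (hn : 2 ≤ n) :
    2 / n - 2 * q ^ (2 : ℝ) + (1 - (2 * n - 1) * (1 - q)) ≤ g q n := by
  have hpow : q ^ n ≤ q ^ (2 : ℝ) := rpow_le_rpow_of_exponent_ge hq0 hq1 hn
  have hbernoulli : 1 + (2 * n - 1) * (q - 1) ≤ (1 + (q - 1)) ^ (2 * n - 1) :=
    one_add_mul_self_le_rpow_one_add (by linarith) (by linarith)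
  rw [add_sub_cancel] at hbernoulli
  unfold g
  linarith

theorem le_g_one_sub_two_add {ε : ℝ} (hε0 : 0 ≤ ε) (hε1 : ε < 1) :
    ε / 2 - 4 * ε ^ 2 ≤ g (1 - ε) (2 + ε) := by
  have hg := le_g_of_le_one (q := 1 - ε) (n := 2 + ε) (by linarith) (by linarith) (by linarith)
  have hdiv : 1 - ε / 2 ≤ 2 / (2 + ε) := by
    rw [le_div_iff₀ (by linarith)]
    nlinarith
  rw [rpow_two] at hg
  nlinarith

/-- There exists `ε₀ > 0` such that for all `ε ∈ (0, ε₀)`,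
`g(1-ε, 2+ε) = 2/(2+ε) - 2(1-ε)^(2+ε) + (1-ε)^(2(2+ε)-1) > 0` (real powers). -/
theorem stmt_5 :
    ∃ ε₀ > (0 : ℝ), ∀ ε ∈ Set.Ioo (0 : ℝ) ε₀,
      0 < 2 / (2 + ε) - 2 * (1 - ε) ^ (2 + ε) + (1 - ε) ^ (2 * (2 + ε) - 1) := by
  refine ⟨1 / 8, by norm_num, fun ε ⟨hε0, hε1⟩ => ?_⟩
  calc 0 < ε / 2 - 4 * ε ^ 2 := by nlinarith
    _ ≤ g (1 - ε) (2 + ε) := le_g_one_sub_two_add hε0.le (by linarith)
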